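/- arXiv:1803.00174 — 3 statements merged into one kernel-verified Lean document; each statement's English description precedes it below -/
import Mathlib

section
/- Let α > 0 and τ₀ > 0, and let a : (0,∞) → ℝ be continuous with a(s) > 0 for all s > 0 and (a(τ) − τ)/τ^{1+α} → 0 as τ → 0⁺. With b(τ) = exp(∫_{τ₀}^{τ} ds/a(s)), one has b(τ) → 0 as τ → 0⁺. Consequently, for every R₀ ∈ ℝ the comoving-observer curve τ ↦ (t(τ), r(τ)) = (b(τ)·cosh R₀, b(τ)·sinh R₀) satisfies t(τ)·sinh R₀ = r(τ)·cosh R₀ for all τ > 0 (it lies on a straight line through the origin) and (t(τ), r(τ)) → (0,0) as τ → 0⁺: all comoving observers emanate from the origin 𝒪 of the extension. -/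
open Filter Topology

/-- For a Milne-like scale factor `a(τ) = τ + o(τ^{1+α})` and
`b(τ) = exp(∫_{τ₀}^{τ} ds / a(s))`, one has `b(τ) → 0` as `τ → 0⁺`; consequently every
comoving-observer curve `τ ↦ (b(τ) cosh R₀, b(τ) sinh R₀)` lies on a straight line through the
origin and converges to the origin `𝒪 = (0,0)` of the extension as `τ → 0⁺`. -/
theorem milne_comoving_observers_emanate_from_origin
    (α τ₀ : ℝ) (hα : 0 < α) (hτ₀ : 0 < τ₀) (a : ℝ → ℝ)
    (hcont : ContinuousOn a (Set.Ioi (0 : ℝ)))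
    (hpos : ∀ s ∈ Set.Ioi (0 : ℝ), 0 < a s)
    (hsmall : Tendsto (fun τ => (a τ - τ) / τ ^ (1 + α)) (𝓝[>] (0 : ℝ)) (𝓝 0))
    (b : ℝ → ℝ)
    (hb : ∀ τ ∈ Set.Ioi (0 : ℝ), b τ = Real.exp (∫ s in τ₀..τ, 1 / a s)) :
    Tendsto b (𝓝[>] (0 : ℝ)) (𝓝 0) ∧
    ∀ R₀ : ℝ,
      (∀ τ ∈ Set.Ioi (0 : ℝ),
        (b τ * Real.cosh R₀) * Real.sinh R₀ = (b τ * Real.sinh R₀) * Real.cosh R₀) ∧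
      Tendsto (fun τ => (b τ * Real.cosh R₀, b τ * Real.sinh R₀)) (𝓝[>] (0 : ℝ))
        (𝓝 ((0 : ℝ), (0 : ℝ))) := by
  set f : ℝ → ℝ := fun s => 1 / a s with hfdef
  have hfcont : ContinuousOn f (Set.Ioi 0) :=
    continuousOn_const.div hcont (fun s hs => (hpos s hs).ne')
  have hfint : ∀ x y : ℝ, 0 < x → 0 < y →
      IntervalIntegrable f MeasureTheory.volume x y := by
    intro x y hx hy
    apply ContinuousOn.intervalIntegrable
    apply hfcont.mono
    intro z hz
    have h1 : min x y ≤ z := hz.1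
    exact lt_of_lt_of_le (lt_min hx hy) h1
  -- obtain δ₁ from hsmall
  have h2 : ∀ᶠ τ in 𝓝[>] (0:ℝ), |(a τ - τ) / τ ^ (1 + α)| < 1/2 := by
    have := hsmall.eventually (eventually_abs_sub_lt 0 (by norm_num : (0:ℝ) < 1/2))
    simpa using this
  obtain ⟨δ₁, hδ₁mem, hδ₁⟩ := mem_nhdsGT_iff_exists_Ioc_subset.mp h2
  have hδ₁pos : 0 < δ₁ := hδ₁mem
  set δ : ℝ := min δ₁ (min 1 τ₀) with hδdef
  have hδpos : 0 < δ := lt_min hδ₁pos (lt_min one_pos hτ₀)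
  have hδ1 : δ ≤ 1 := le_trans (min_le_right _ _) (min_le_left _ _)
  have hδτ₀ : δ ≤ τ₀ := le_trans (min_le_right _ _) (min_le_right _ _)
  -- key pointwise bound
  have hkey : ∀ s ∈ Set.Ioc (0:ℝ) δ, 2 / (3 * s) ≤ f s := by
    intro s hs
    have hs0 : 0 < s := hs.1
    have hsδ₁ : s ≤ δ₁ := le_trans hs.2 (min_le_left _ _)
    have habs : |(a s - s) / s ^ (1 + α)| < 1/2 := hδ₁ ⟨hs0, hsδ₁⟩
    have hrpos : (0:ℝ) < s ^ (1 + α) := Real.rpow_pos_of_pos hs0 _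
    have habs2 : |a s - s| < (1/2) * s ^ (1 + α) := by
      rw [abs_div, div_lt_iff₀ (abs_pos.mpr hrpos.ne')] at habs
      rwa [abs_of_pos hrpos] at habs
    have hrle : s ^ (1 + α) ≤ s := by
      have : s ^ (1 + α) = s * s ^ α := by
        rw [Real.rpow_add hs0, Real.rpow_one]
      rw [this]
      have hle1 : s ^ α ≤ 1 := Real.rpow_le_one hs0.le (le_trans hs.2 hδ1) hα.le
      nlinarith
    have hupper : a s ≤ 3 / 2 * s := by
      have := (abs_lt.mp habs2).2
      nlinarith
    have hapos : 0 < a s := hpos s hs0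
    have h1 : 1 / (3 / 2 * s) ≤ 1 / a s := one_div_le_one_div_of_le hapos hupper
    have h2' : 2 / (3 * s) = 1 / (3 / 2 * s) := by
      field_simp
    rw [h2']
    exact h1
  -- integral bound for τ ∈ Ioc 0 δ
  have hgint : ∀ x y : ℝ, 0 < x → 0 < y →
      IntervalIntegrable (fun s => 2 / (3 * s)) MeasureTheory.volume x y := by
    intro x y hx hy
    apply ContinuousOn.intervalIntegrable
    apply ContinuousOn.div continuousOn_const (by fun_prop)
    intro z hz
    have h1 : min x y ≤ z := hz.1
    have : (0:ℝ) < z := lt_of_lt_of_le (lt_min hx hy) h1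
    positivity
  have hbound : ∀ τ ∈ Set.Ioc (0:ℝ) δ,
      (∫ s in τ₀..τ, f s) ≤ 2/3 * Real.log τ - 2/3 * Real.log δ := by
    intro τ hτ
    have hτ0 : 0 < τ := hτ.1
    have hτδ : τ ≤ δ := hτ.2
    have hsplit : (∫ s in τ..δ, f s) + (∫ s in δ..τ₀, f s) = ∫ s in τ..τ₀, f s :=
      intervalIntegral.integral_add_adjacent_intervals
        (hfint τ δ hτ0 hδpos) (hfint δ τ₀ hδpos hτ₀)
    have hnn : 0 ≤ ∫ s in δ..τ₀, f s := by
      apply intervalIntegral.integral_nonneg hδτ₀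
      intro s hs
      have : 0 < a s := hpos s (lt_of_lt_of_le hδpos hs.1)
      positivity
    have hmono : (∫ s in τ..δ, (2 / (3 * s))) ≤ ∫ s in τ..δ, f s := by
      apply intervalIntegral.integral_mono_on hτδ (hgint τ δ hτ0 hδpos)
        (hfint τ δ hτ0 hδpos)
      intro s hs
      exact hkey s ⟨lt_of_lt_of_le hτ0 hs.1, hs.2⟩
    have hcomp : (∫ s in τ..δ, (2 / (3 * s))) = 2/3 * (Real.log δ - Real.log τ) := by
      have heq : (fun s : ℝ => 2 / (3 * s)) = fun s : ℝ => (2/3) * (1 / s) := by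
        funext s; ring
      rw [heq, intervalIntegral.integral_const_mul, integral_one_div]
      · rw [Real.log_div hδpos.ne' hτ0.ne']
      · intro h
        have h1 : τ ⊓ δ ≤ 0 := h.1
        have : (0:ℝ) < τ ⊓ δ := lt_min hτ0 hδpos
        linarith
    have hsym : (∫ s in τ₀..τ, f s) = -∫ s in τ..τ₀, f s := by
      rw [intervalIntegral.integral_symm]
    rw [hsym]
    rw [← hsplit]
    have := hcomp ▸ hmono
    linarith
  -- tendsto of integral to atBot
  have hlog : Tendsto Real.log (𝓝[>] (0:ℝ)) atBot := Real.tendsto_log_nhdsGT_zero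
  have hgtend : Tendsto (fun τ => 2/3 * Real.log τ - 2/3 * Real.log δ)
      (𝓝[>] (0:ℝ)) atBot := by
    apply tendsto_atBot_add_const_right
    exact hlog.const_mul_atBot (by norm_num)
  have hItend : Tendsto (fun τ => ∫ s in τ₀..τ, f s) (𝓝[>] (0:ℝ)) atBot := by
    apply tendsto_atBot_mono' _ _ hgtend
    filter_upwards [Ioc_mem_nhdsGT_of_mem (Set.mem_Ico.mpr ⟨le_refl 0, hδpos⟩)] with τ hτ
    exact hbound τ hτ
  have hbtend : Tendsto b (𝓝[>] (0:ℝ)) (𝓝 0) := by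
    have hexp : Tendsto (fun τ => Real.exp (∫ s in τ₀..τ, f s)) (𝓝[>] (0:ℝ)) (𝓝 0) :=
      Real.tendsto_exp_atBot.comp hItend
    apply hexp.congr'
    filter_upwards [self_mem_nhdsWithin] with τ hτ
    exact (hb τ hτ).symm
  refine ⟨hbtend, fun R₀ => ⟨fun τ _ => by ring, ?_⟩⟩
  have h1 : Tendsto (fun τ => b τ * Real.cosh R₀) (𝓝[>] (0:ℝ)) (𝓝 0) := by
    simpa using hbtend.mul_const (Real.cosh R₀)
  have h2 : Tendsto (fun τ => b τ * Real.sinh R₀) (𝓝[>] (0:ℝ)) (𝓝 0) := by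
    simpa using hbtend.mul_const (Real.sinh R₀)
  exact h1.prodMk_nhds h2
end

section
/- Under the Friedmann limit hypotheses, (a′(τ)² − 1)/a(τ)² → α as τ → 0⁺. Equivalently, the Friedmann energy density ρ(τ) = (3/(8π))·[(a′(τ)/a(τ))² − 1/a(τ)²] tends to 3α/(8π) as τ → 0⁺. -/
open Filter Topology

/-!
Write `a′ − 1 = f′`. Since `f′(τ)/τ → 0`, `f′ → 0`, so l'Hôpital's rule applied to `f′(τ)/τ²`
with `f″(τ)/(2τ) → α/2` gives `f′(τ)/τ² → α/2`. Factor
`(a′² − 1)/a² = (a′ − 1)/τ² · (a′ + 1) · (τ/a)²`, where `a′ + 1 → 2` and `τ/a → 1` because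
`f(τ)/τ → 0`; the product tends to `α/2 · 2 · 1 = α`.
-/

lemma tendsto_nhdsGT_zero_of_tendsto_div_id {f : ℝ → ℝ} {L : ℝ}
    (hf : Tendsto (fun x => f x / x) (𝓝[>] 0) (𝓝 L)) : Tendsto f (𝓝[>] 0) (𝓝 0) := by
  have hx : Tendsto (fun x : ℝ => x) (𝓝[>] 0) (𝓝 0) := tendsto_nhdsWithin_of_tendsto_nhds tendsto_id
  have := hf.mul hx
  rw [mul_zero] at this
  refine this.congr' ?_
  filter_upwards [self_mem_nhdsWithin] with x (hx : 0 < x)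
  exact div_mul_cancel₀ _ hx.ne'

lemma tendsto_div_pow_succ_of_hasDerivAt {g g' : ℝ → ℝ} {δ L : ℝ} {n : ℕ} (hδ : 0 < δ)
    (hg : ∀ x ∈ Set.Ioo 0 δ, HasDerivAt g (g' x) x) (hg0 : Tendsto g (𝓝[>] 0) (𝓝 0))
    (hg' : Tendsto (fun x => g' x / x ^ n) (𝓝[>] 0) (𝓝 L)) :
    Tendsto (fun x => g x / x ^ (n + 1)) (𝓝[>] 0) (𝓝 (L / (n + 1))) := by
  refine HasDerivAt.lhopital_zero_right_on_Ioo (g' := fun x => (n + 1 : ℝ) * x ^ n) hδ hg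
    (fun x _ => by simpa using hasDerivAt_pow (n + 1) x)
    (fun x hx => mul_ne_zero (by positivity) (pow_ne_zero n hx.1.ne')) hg0
    (tendsto_nhdsWithin_of_tendsto_nhds ?_) ?_
  · simpa using (continuous_pow (n + 1)).tendsto (0 : ℝ)
  · refine (hg'.div_const (n + 1 : ℝ)).congr' ?_
    filter_upwards with x
    rw [div_div, mul_comm]

lemma tendsto_id_div_of_tendsto_sub_id_div {a : ℝ → ℝ}
    (ha : Tendsto (fun x => (a x - x) / x) (𝓝[>] 0) (𝓝 0)) :
    Tendsto (fun x => x / a x) (𝓝[>] 0) (𝓝 1) := by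
  have hratio : Tendsto (fun x => a x / x) (𝓝[>] 0) (𝓝 1) := by
    refine (zero_add (1 : ℝ) ▸ ha.add_const 1).congr' ?_
    filter_upwards [self_mem_nhdsWithin] with x (hx : 0 < x)
    rw [sub_div, div_self hx.ne', sub_add_cancel]
  simpa only [inv_div, inv_one] using hratio.inv₀ one_ne_zero

lemma sq_sub_one_div_sq_eq {p b τ : ℝ} (hτ : τ ≠ 0) :
    (p ^ 2 - 1) / b ^ 2 = (p - 1) / τ ^ 2 * (p + 1) * (τ / b) ^ 2 := by
  rcases eq_or_ne b 0 with rfl | hb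
  · simp
  · field_simp
    ring

theorem friedmann_energy_density_limit_general
    (α δ : ℝ) (hδ : 0 < δ) (a : ℝ → ℝ)
    (hdiff2 : ∀ τ ∈ Set.Ioo (0 : ℝ) δ, DifferentiableAt ℝ (deriv a) τ)
    (hf0 : Tendsto (fun τ => (a τ - τ) / τ) (𝓝[>] (0 : ℝ)) (𝓝 0))
    (hf1 : Tendsto (fun τ => (deriv a τ - 1) / τ) (𝓝[>] (0 : ℝ)) (𝓝 0))
    (hf2 : Tendsto (fun τ => deriv (deriv a) τ / τ) (𝓝[>] (0 : ℝ)) (𝓝 α)) :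
    Tendsto (fun τ => ((deriv a τ) ^ 2 - 1) / (a τ) ^ 2) (𝓝[>] (0 : ℝ)) (𝓝 α) ∧
    Tendsto (fun τ => (3 / (8 * Real.pi)) * ((deriv a τ / a τ) ^ 2 - 1 / (a τ) ^ 2))
      (𝓝[>] (0 : ℝ)) (𝓝 (3 * α / (8 * Real.pi))) := by
  have hf1' : Tendsto (fun τ => deriv a τ - 1) (𝓝[>] 0) (𝓝 0) :=
    tendsto_nhdsGT_zero_of_tendsto_div_id hf1
  have hquot : Tendsto (fun τ => (deriv a τ - 1) / τ ^ 2) (𝓝[>] 0) (𝓝 (α / 2)) := by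
    simpa [one_add_one_eq_two] using tendsto_div_pow_succ_of_hasDerivAt (n := 1) hδ
      (fun τ hτ => (hdiff2 τ hτ).hasDerivAt.sub_const 1) hf1' (by simpa using hf2)
  have hplus : Tendsto (fun τ => deriv a τ + 1) (𝓝[>] 0) (𝓝 2) := by
    simpa [one_add_one_eq_two] using (hf1'.add_const 2).congr fun τ => by ring
  have hmain : Tendsto (fun τ => ((deriv a τ) ^ 2 - 1) / (a τ) ^ 2) (𝓝[>] 0) (𝓝 α) := by
    have := hquot.mul (hplus.mul ((tendsto_id_div_of_tendsto_sub_id_div hf0).pow 2))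
    rw [show α / 2 * (2 * 1 ^ 2) = α by ring] at this
    refine this.congr' ?_
    filter_upwards [self_mem_nhdsWithin] with τ (hτ : 0 < τ)
    rw [sq_sub_one_div_sq_eq hτ.ne', mul_assoc]
  refine ⟨hmain, ?_⟩
  convert hmain.const_mul (3 / (8 * Real.pi)) using 2 with τ
  · rw [div_pow, ← sub_div]
  · ring

/-- Under the Friedmann limit hypotheses (with `f(τ) = a(τ) − τ`:
`f(τ)/τ → 0`, `f′(τ)/τ → 0`, `f″(τ)/τ → α` as `τ → 0⁺`), one has
`(a′(τ)² − 1)/a(τ)² → α`; equivalently the Friedmann energy density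
`ρ(τ) = (3/(8π))[(a′/a)² − 1/a²]` tends to `3α/(8π)` as `τ → 0⁺`. -/
theorem friedmann_energy_density_limit
    (α δ : ℝ) (hδ : 0 < δ) (a : ℝ → ℝ)
    (hpos : ∀ τ ∈ Set.Ioo (0 : ℝ) δ, 0 < a τ)
    (hdiff : ∀ τ ∈ Set.Ioo (0 : ℝ) δ, DifferentiableAt ℝ a τ)
    (hdiff2 : ∀ τ ∈ Set.Ioo (0 : ℝ) δ, DifferentiableAt ℝ (deriv a) τ)
    (hf0 : Tendsto (fun τ => (a τ - τ) / τ) (𝓝[>] (0 : ℝ)) (𝓝 0))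
    (hf1 : Tendsto (fun τ => (deriv a τ - 1) / τ) (𝓝[>] (0 : ℝ)) (𝓝 0))
    (hf2 : Tendsto (fun τ => deriv (deriv a) τ / τ) (𝓝[>] (0 : ℝ)) (𝓝 α)) :
    Tendsto (fun τ => ((deriv a τ) ^ 2 - 1) / (a τ) ^ 2) (𝓝[>] (0 : ℝ)) (𝓝 α) ∧
    Tendsto (fun τ => (3 / (8 * Real.pi)) * ((deriv a τ / a τ) ^ 2 - 1 / (a τ) ^ 2))
      (𝓝[>] (0 : ℝ)) (𝓝 (3 * α / (8 * Real.pi))) :=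
  friedmann_energy_density_limit_general α δ hδ a hdiff2 hf0 hf1 hf2
end

section
/- Under the Friedmann limit hypotheses, define the energy density ρ(τ) = (3/(8π))·[(a′(τ)/a(τ))² − 1/a(τ)²] and the pressure p(τ) = −(1/(8π))·(2a″(τ)/a(τ)) − (1/3)ρ(τ). Then ρ(τ) → 3α/(8π) and p(τ) → −3α/(8π) as τ → 0⁺; in particular lim_{τ→0⁺} ρ(τ) = −lim_{τ→0⁺} p(τ), so the initial energy density and pressure have the form of a cosmological constant. -/
open Filter Topology

/-! The limit conditions give `a τ ~ τ`, `a' → 1` and `a'' / a → α` as `τ → 0⁺`. The density is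
`(8π/3) ρ = (a'² - 1) / a²`, a `0/0` quotient whose quotient of derivatives is
`2 a' a'' / (2 a a') = a'' / a`, so l'Hôpital's rule gives `ρ → 3α/(8π)`; then
`p = -(1/(4π)) (a'' / a) - ρ / 3 → -3α/(8π)`. -/

section Limits

variable {ι : Type*} {l : Filter ι} {f g : ι → ℝ} {L : ℝ}

theorem Filter.Tendsto.div_add_one_of_sub_div (hg : ∀ᶠ x in l, g x ≠ 0)
    (h : Tendsto (fun x => (f x - g x) / g x) l (𝓝 L)) :
    Tendsto (fun x => f x / g x) l (𝓝 (L + 1)) := by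
  refine (h.add_const 1).congr' ?_
  filter_upwards [hg] with x hx
  field_simp
  ring

theorem Filter.Tendsto.zero_of_div_of_tendsto_zero (hg : ∀ᶠ x in l, g x ≠ 0)
    (h : Tendsto (fun x => f x / g x) l (𝓝 L)) (hg0 : Tendsto g l (𝓝 0)) :
    Tendsto f l (𝓝 0) := by
  refine (mul_zero L ▸ h.mul hg0).congr' ?_
  filter_upwards [hg] with x hx
  exact div_mul_cancel₀ (f x) hx

end Limits

theorem eventually_pos_of_tendsto_div_id {a : ℝ → ℝ} {L : ℝ} (hL : 0 < L)
    (h : Tendsto (fun τ => a τ / τ) (𝓝[>] (0 : ℝ)) (𝓝 L)) :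
    ∀ᶠ τ in 𝓝[>] (0 : ℝ), 0 < a τ := by
  filter_upwards [h.eventually (eventually_gt_nhds hL), self_mem_nhdsWithin]
    with τ hquot hτ
  exact (div_pos_iff_of_pos_right hτ).mp hquot

theorem tendsto_deriv_sq_sub_one_div_sq {a : ℝ → ℝ} {c α : ℝ}
    (hdiff2 : ∀ᶠ τ in 𝓝[>] c, DifferentiableAt ℝ (deriv a) τ)
    (ha_ne : ∀ᶠ τ in 𝓝[>] c, a τ ≠ 0)
    (ha : Tendsto a (𝓝[>] c) (𝓝 0)) (ha' : Tendsto (deriv a) (𝓝[>] c) (𝓝 1))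
    (ha'' : Tendsto (fun τ => deriv (deriv a) τ / a τ) (𝓝[>] c) (𝓝 α)) :
    Tendsto (fun τ => (deriv a τ ^ 2 - 1) / a τ ^ 2) (𝓝[>] c) (𝓝 α) := by
  have ha'_ne : ∀ᶠ τ in 𝓝[>] c, deriv a τ ≠ 0 :=
    ha'.eventually_ne one_ne_zero
  have hnum : ∀ᶠ τ in 𝓝[>] c,
      HasDerivAt (fun x => deriv a x ^ 2 - 1) (2 * deriv a τ * deriv (deriv a) τ) τ := by
    filter_upwards [hdiff2] with τ hτ
    exact ((hτ.hasDerivAt.fun_pow 2).sub_const 1).congr_deriv (by ring)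
  -- `deriv a τ ≠ 0` forces differentiability: `deriv` is `0` where `a` is not differentiable
  have hden : ∀ᶠ τ in 𝓝[>] c, HasDerivAt (fun x => a x ^ 2) (2 * a τ * deriv a τ) τ := by
    filter_upwards [ha'_ne] with τ hτ
    exact ((differentiableAt_of_deriv_ne_zero hτ).hasDerivAt.fun_pow 2).congr_deriv (by ring)
  refine HasDerivAt.lhopital_zero_nhdsGT hnum hden ?_ ?_ ?_ ?_
  · filter_upwards [ha_ne, ha'_ne] with τ h h' using by positivity
  · simpa using (ha'.pow 2).sub_const 1
  · simpa using ha.pow 2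
  · refine ha''.congr' ?_
    filter_upwards [ha_ne, ha'_ne] with τ h h'
    field_simp

theorem friedmann_initial_cosmological_constant_general
    (α δ : ℝ) (hδ : 0 < δ) (a : ℝ → ℝ)
    (hdiff2 : ∀ τ ∈ Set.Ioo (0 : ℝ) δ, DifferentiableAt ℝ (deriv a) τ)
    (hf0 : Tendsto (fun τ => (a τ - τ) / τ) (𝓝[>] (0 : ℝ)) (𝓝 0))
    (hf1 : Tendsto (fun τ => (deriv a τ - 1) / τ) (𝓝[>] (0 : ℝ)) (𝓝 0))
    (hf2 : Tendsto (fun τ => deriv (deriv a) τ / τ) (𝓝[>] (0 : ℝ)) (𝓝 α))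
    (ρ p : ℝ → ℝ)
    (hρ : ∀ τ ∈ Set.Ioo (0 : ℝ) δ,
      ρ τ = (3 / (8 * Real.pi)) * ((deriv a τ / a τ) ^ 2 - 1 / (a τ) ^ 2))
    (hp : ∀ τ ∈ Set.Ioo (0 : ℝ) δ,
      p τ = -(1 / (8 * Real.pi)) * (2 * deriv (deriv a) τ / a τ) - (1 / 3) * ρ τ) :
    Tendsto ρ (𝓝[>] (0 : ℝ)) (𝓝 (3 * α / (8 * Real.pi))) ∧
    Tendsto p (𝓝[>] (0 : ℝ)) (𝓝 (-(3 * α / (8 * Real.pi)))) := by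
  have hIoo : ∀ᶠ τ in 𝓝[>] (0 : ℝ), τ ∈ Set.Ioo 0 δ := Ioo_mem_nhdsGT hδ
  have hτ_ne : ∀ᶠ τ in 𝓝[>] (0 : ℝ), τ ≠ 0 :=
    eventually_mem_nhdsWithin.mono fun _ h => ne_of_gt h
  have hτ : Tendsto (fun τ : ℝ => τ) (𝓝[>] 0) (𝓝 0) := nhdsWithin_le_nhds
  have ha_div : Tendsto (fun τ => a τ / τ) (𝓝[>] 0) (𝓝 1) :=
    zero_add (1 : ℝ) ▸ hf0.div_add_one_of_sub_div hτ_ne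
  have ha_ne : ∀ᶠ τ in 𝓝[>] (0 : ℝ), a τ ≠ 0 :=
    (eventually_pos_of_tendsto_div_id one_pos ha_div).mono fun _ h => h.ne'
  have ha : Tendsto a (𝓝[>] 0) (𝓝 0) := ha_div.zero_of_div_of_tendsto_zero hτ_ne hτ
  have ha' : Tendsto (deriv a) (𝓝[>] 0) (𝓝 1) := by
    simpa using (hf1.zero_of_div_of_tendsto_zero hτ_ne hτ).add_const 1
  have ha'' : Tendsto (fun τ => deriv (deriv a) τ / a τ) (𝓝[>] 0) (𝓝 α) := by
    refine (div_one α ▸ hf2.div ha_div one_ne_zero).congr' ?_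
    filter_upwards [hτ_ne] with τ hτ using div_div_div_cancel_right₀ hτ _ _
  have hρlim : Tendsto ρ (𝓝[>] 0) (𝓝 (3 * α / (8 * Real.pi))) := by
    have h := (tendsto_deriv_sq_sub_one_div_sq (hIoo.mono hdiff2) ha_ne ha ha' ha'').const_mul
      (3 / (8 * Real.pi))
    refine (div_mul_eq_mul_div 3 (8 * Real.pi) α ▸ h).congr' ?_
    filter_upwards [hIoo] with τ hτ
    rw [hρ τ hτ, div_pow, sub_div]
  have hplim :=
    ((ha''.const_mul 2).const_mul (-(1 / (8 * Real.pi)))).sub (hρlim.const_mul (1 / 3))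
  rw [show -(1 / (8 * Real.pi)) * (2 * α) - 1 / 3 * (3 * α / (8 * Real.pi))
      = -(3 * α / (8 * Real.pi)) by ring] at hplim
  refine ⟨hρlim, hplim.congr' ?_⟩
  filter_upwards [hIoo] with τ hτ
  rw [hp τ hτ, mul_div_assoc]

/-- Under the Friedmann limit hypotheses, the Friedmann energy density
`ρ = (3/(8π))[(a′/a)² − 1/a²]` and pressure `p = −(1/(8π))(2a″/a) − ρ/3` satisfy
`ρ(τ) → 3α/(8π)` and `p(τ) → −3α/(8π)` as `τ → 0⁺`; in particular
`lim ρ = − lim p`, so the initial energy density and pressure have the form of a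
cosmological constant. -/
theorem friedmann_initial_cosmological_constant
    (α δ : ℝ) (hδ : 0 < δ) (a : ℝ → ℝ)
    (hpos : ∀ τ ∈ Set.Ioo (0 : ℝ) δ, 0 < a τ)
    (hdiff : ∀ τ ∈ Set.Ioo (0 : ℝ) δ, DifferentiableAt ℝ a τ)
    (hdiff2 : ∀ τ ∈ Set.Ioo (0 : ℝ) δ, DifferentiableAt ℝ (deriv a) τ)
    (hf0 : Tendsto (fun τ => (a τ - τ) / τ) (𝓝[>] (0 : ℝ)) (𝓝 0))
    (hf1 : Tendsto (fun τ => (deriv a τ - 1) / τ) (𝓝[>] (0 : ℝ)) (𝓝 0))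
    (hf2 : Tendsto (fun τ => deriv (deriv a) τ / τ) (𝓝[>] (0 : ℝ)) (𝓝 α))
    (ρ p : ℝ → ℝ)
    (hρ : ∀ τ ∈ Set.Ioo (0 : ℝ) δ,
      ρ τ = (3 / (8 * Real.pi)) * ((deriv a τ / a τ) ^ 2 - 1 / (a τ) ^ 2))
    (hp : ∀ τ ∈ Set.Ioo (0 : ℝ) δ,
      p τ = -(1 / (8 * Real.pi)) * (2 * deriv (deriv a) τ / a τ) - (1 / 3) * ρ τ) :
    Tendsto ρ (𝓝[>] (0 : ℝ)) (𝓝 (3 * α / (8 * Real.pi))) ∧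
    Tendsto p (𝓝[>] (0 : ℝ)) (𝓝 (-(3 * α / (8 * Real.pi)))) :=
  friedmann_initial_cosmological_constant_general α δ hδ a hdiff2 hf0 hf1 hf2 ρ p hρ hp
end
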